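/- arXiv:2404.11879 — 5 statements merged into one kernel-verified Lean document; each statement's English description precedes it below -/
import Mathlib

section
/- Let T be a finite set (of time slots) and J a finite indexed family of unit jobs, where each job j ∈ J has a nonempty set I_j ⊆ T of allowed slots. Call a set F ⊆ T independent if there exists an injective map σ : J → T with σ(j) ∈ I_j \ F for all j ∈ J. Assume J is feasible, i.e. the empty set is independent. Then the family of independent sets is the family of independent sets of a matroid on T: (i) ∅ is independent; (ii) every subset of an independent set is independent; (iii) if A and B are independent with |A| < |B|, then there exists x ∈ B \ A such that A ∪ {x} is independent. -/
/-- The scheduling matroid: `T` is a finite set of time slots, `J` a finite indexed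
family of unit jobs, each job `j` having a nonempty allowed-slot set `I j ⊆ T`.
A set `F` of slots is independent if the jobs can be feasibly scheduled avoiding `F`,
i.e. there is an injective `σ : J → T` with `σ j ∈ I j \ F` for all `j`.
If the job set is feasible (`∅` is independent), the independent sets form a matroid. -/
theorem scheduling_matroid
    {T : Type*} [Fintype T] [DecidableEq T]
    {J : Type*} [Fintype J]
    (I : J → Finset T) (hI : ∀ j, (I j).Nonempty)
    (Indep : Finset T → Prop)
    (hIndep : ∀ F : Finset T,
      Indep F ↔ ∃ σ : J → T, Function.Injective σ ∧ ∀ j, σ j ∈ I j \ F)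
    (hfeas : Indep ∅) :
    Indep ∅ ∧
    (∀ A B : Finset T, Indep A → B ⊆ A → Indep B) ∧
    (∀ A B : Finset T, Indep A → Indep B → A.card < B.card →
      ∃ x ∈ B \ A, Indep (insert x A)) := by
  classical
  have hall : ∀ F : Finset T,
      Indep F ↔ ∀ S : Finset J, S.card ≤ (S.biUnion (fun j => I j \ F)).card := by
    intro F
    rw [hIndep F, ← Finset.all_card_le_biUnion_card_iff_exists_injective]
  refine ⟨hfeas, ?_, ?_⟩
  · intro A B hA hBA
    rw [hIndep] at hA ⊢
    obtain ⟨σ, hσinj, hσ⟩ := hA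
    refine ⟨σ, hσinj, fun j => ?_⟩
    have := hσ j
    simp only [Finset.mem_sdiff] at this ⊢
    exact ⟨this.1, fun h => this.2 (hBA h)⟩
  · intro A B hA hB hcard
    by_contra hcon
    push_neg at hcon
    rw [hall] at hA hB
    set f : J → Finset T := fun j => I j \ A with hf
    -- each x ∈ B \ A has a tight set containing x in its neighborhood
    have key : ∀ x ∈ B \ A, ∃ S : Finset J,
        (S.biUnion f).card = S.card ∧ x ∈ S.biUnion f := by
      intro x hx
      have h1 := hcon x hx
      rw [hall] at h1
      push_neg at h1
      obtain ⟨S, hS⟩ := h1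
      have h2 : S.biUnion (fun j => I j \ insert x A) = (S.biUnion f).erase x := by
        ext y
        simp only [Finset.mem_biUnion, Finset.mem_sdiff, Finset.mem_insert,
          Finset.mem_erase, hf]
        constructor
        · rintro ⟨j, hj, hjy, hy⟩
          push_neg at hy
          exact ⟨hy.1, j, hj, hjy, hy.2⟩
        · rintro ⟨hyx, j, hj, hjy, hy⟩
          exact ⟨j, hj, hjy, by push_neg; exact ⟨hyx, hy⟩⟩
      rw [h2] at hS
      have hAS := hA S
      by_cases hxm : x ∈ S.biUnion f
      · refine ⟨S, ?_, hxm⟩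
        have := Finset.card_erase_of_mem hxm
        omega
      · rw [Finset.erase_eq_of_notMem hxm] at hS
        omega
    -- tight sets are closed under union
    have tight_union : ∀ S S' : Finset J,
        (S.biUnion f).card = S.card → (S'.biUnion f).card = S'.card →
        ((S ∪ S').biUnion f).card = (S ∪ S').card := by
      intro S S' h1 h2
      have hu : (S ∪ S').biUnion f = S.biUnion f ∪ S'.biUnion f := by
        ext y
        simp only [Finset.mem_biUnion, Finset.mem_union]
        constructor
        · rintro ⟨j, hj | hj, hjy⟩
          · exact Or.inl ⟨j, hj, hjy⟩
          · exact Or.inr ⟨j, hj, hjy⟩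
        · rintro (⟨j, hj, hjy⟩ | ⟨j, hj, hjy⟩)
          · exact ⟨j, Or.inl hj, hjy⟩
          · exact ⟨j, Or.inr hj, hjy⟩
      have hi : (S ∩ S').biUnion f ⊆ S.biUnion f ∩ S'.biUnion f := by
        intro y hy
        simp only [Finset.mem_biUnion, Finset.mem_inter] at hy ⊢
        obtain ⟨j, hj, hjy⟩ := hy
        exact ⟨⟨j, hj.1, hjy⟩, ⟨j, hj.2, hjy⟩⟩
      have c1 := Finset.card_union_add_card_inter (S.biUnion f) (S'.biUnion f)
      have c2 := Finset.card_union_add_card_inter S S'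
      have c3 := Finset.card_le_card hi
      have c4 := hA (S ∪ S')
      have c5 := hA (S ∩ S')
      rw [hu] at c4 ⊢
      omega
    choose! s hs1 hs2 using key
    -- union over all x ∈ B \ A
    have main : ∀ C : Finset T, C ⊆ B \ A →
        ((C.biUnion s).biUnion f).card = (C.biUnion s).card ∧
        C ⊆ (C.biUnion s).biUnion f := by
      intro C
      refine Finset.induction_on C (by simp) ?_
      intro a C' ha ih hsub
      have haBA : a ∈ B \ A := hsub (Finset.mem_insert_self a C')
      have hC' : C' ⊆ B \ A := fun y hy => hsub (Finset.mem_insert_of_mem hy)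
      obtain ⟨ih1, ih2⟩ := ih hC'
      rw [Finset.biUnion_insert]
      constructor
      · exact tight_union _ _ (hs1 a haBA) ih1
      · intro y hy
        have hmono : ∀ (S S' : Finset J), S ⊆ S' → S.biUnion f ⊆ S'.biUnion f :=
          fun S S' h => Finset.biUnion_subset_biUnion_of_subset_left f h
        rcases Finset.mem_insert.mp hy with h | hy'
        · subst h
          exact hmono _ _ Finset.subset_union_left (hs2 _ haBA)
        · exact hmono _ _ Finset.subset_union_right (ih2 hy')
    set S : Finset J := (B \ A).biUnion s with hSdef
    obtain ⟨htight, hcover⟩ := main (B \ A) (Finset.Subset.refl _)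
    -- N = full neighborhood
    set N : Finset T := S.biUnion (fun j => I j) with hN
    have hNA : S.biUnion f = N \ A := by
      ext y
      simp only [Finset.mem_biUnion, Finset.mem_sdiff, hf, hN]
      tauto
    have hNB : S.biUnion (fun j => I j \ B) = N \ B := by
      ext y
      simp only [Finset.mem_biUnion, Finset.mem_sdiff, hN]
      tauto
    have hBsub : B \ A ⊆ N \ A := by rw [← hNA]; exact hcover
    -- cardinal bookkeeping
    have e1 := Finset.card_inter_add_card_sdiff N A
    have e2 := Finset.card_inter_add_card_sdiff N B
    have e3 := Finset.card_inter_add_card_sdiff A B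
    have e4 := Finset.card_inter_add_card_sdiff B A
    have hab : (A ∩ B).card = (B ∩ A).card := by rw [Finset.inter_comm]
    -- |N ∩ B| ≥ |B \ A| + |N ∩ A ∩ B|
    have h5 : (B \ A) ∪ (N ∩ A ∩ B) ⊆ N ∩ B := by
      intro y hy
      simp only [Finset.mem_union, Finset.mem_inter, Finset.mem_sdiff] at hy ⊢
      rcases hy with hy | hy
      · have := hBsub (Finset.mem_sdiff.mpr hy)
        exact ⟨(Finset.mem_sdiff.mp this).1, hy.1⟩
      · exact ⟨hy.1.1, hy.2⟩
    have h6 : Disjoint (B \ A) (N ∩ A ∩ B) := by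
      rw [Finset.disjoint_left]
      intro y hy hy'
      simp only [Finset.mem_sdiff] at hy
      simp only [Finset.mem_inter] at hy'
      exact hy.2 hy'.1.2
    have h7 := Finset.card_union_of_disjoint h6
    have h8 := Finset.card_le_card h5
    -- |N ∩ A| = |N ∩ A ∩ B| + |(N ∩ A) \ B| and (N ∩ A) \ B ⊆ A \ B
    have e9 := Finset.card_inter_add_card_sdiff (N ∩ A) B
    have h10 : (N ∩ A) \ B ⊆ A \ B := by
      intro y hy
      simp only [Finset.mem_sdiff, Finset.mem_inter] at hy ⊢
      exact ⟨hy.1.2, hy.2⟩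
    have h11 := Finset.card_le_card h10
    have hBfail := hB S
    rw [hNB] at hBfail
    rw [hNA] at htight
    have hBA := Finset.card_le_card hBsub
    have hScard : S.card = ((B \ A).biUnion s).card := by rw [hSdef]
    clear_value S N f
    omega
end

section
/- Let U be a finite set, γ : U → ι an assignment of each element to a group, α ≥ 1 a real number, and let f : Finset U → ℝ be monotone and submodular with f(∅) ≥ 0. Let a_1, …, a_k ∈ U lie in pairwise distinct groups, and write S_j = {a_1, …, a_j} (S_0 = ∅). Suppose the greedy guarantee holds: for every j ∈ {1, …, k} and every e ∈ U whose group γ(e) does not occur among γ(a_1), …, γ(a_{j−1}), one has α·(f(S_{j−1} ∪ {a_j}) − f(S_{j−1})) ≥ f(S_{j−1} ∪ {e}) − f(S_{j−1}). Then for every O ⊆ U with |O| ≤ k on which γ is injective (at most one element per group), (α + 1)·f(S_k) ≥ f(O). -/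
private lemma marg_le' {U : Type*} [DecidableEq U] (f : Finset U → ℝ)
    (hmono : ∀ S H : Finset U, S ⊆ H → f S ≤ f H)
    (hsub : ∀ S H : Finset U, f (S ∪ H) + f (S ∩ H) ≤ f S + f H)
    {Sa T : Finset U} (h : Sa ⊆ T) (x : U) :
    f (insert x T) - f T ≤ f (insert x Sa) - f Sa := by
  by_cases hx : x ∈ T
  · rw [Finset.insert_eq_self.mpr hx]
    have := hmono Sa (insert x Sa) (Finset.subset_insert x Sa)
    linarith
  · have h2 := hsub (insert x Sa) T
    rw [Finset.insert_union, Finset.union_eq_right.mpr h,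
      Finset.insert_inter_of_notMem hx, Finset.inter_eq_left.mpr h] at h2
    linarith

private lemma union_marg' {U : Type*} [DecidableEq U] (f : Finset U → ℝ)
    (hmono : ∀ S H : Finset U, S ⊆ H → f S ≤ f H)
    (hsub : ∀ S H : Finset U, f (S ∪ H) + f (S ∩ H) ≤ f S + f H)
    (T : Finset U) (A : Finset U) :
    f (A ∪ T) - f T ≤ ∑ x ∈ A, (f (insert x T) - f T) := by
  induction A using Finset.induction_on with
  | empty => simp
  | @insert x A hx ih =>
    rw [Finset.sum_insert hx, Finset.insert_union]
    have h1 : f (insert x (A ∪ T)) - f (A ∪ T) ≤ f (insert x T) - f T :=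
      marg_le' f hmono hsub Finset.subset_union_right x
    linarith

/-- Greedy with an `α`-approximate oracle for monotone submodular maximization under
group (partition matroid) constraints is a `1/(α+1)`-approximation: if the elements
`a 0, …, a (k-1)` chosen greedily lie in pairwise distinct groups and each greedy step
`α`-approximately dominates the marginal value of any element from a still-unused group,
then for every feasible `O` (at most one element per group, `|O| ≤ k`),
`(α + 1) * f (S k) ≥ f O`, where `S j = {a 0, …, a (j-1)}`. -/
theorem greedy_smgc_apx
    {U : Type*} [Fintype U] [DecidableEq U] {ι : Type*}
    (γ : U → ι) (α : ℝ) (hα : 1 ≤ α)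
    (f : Finset U → ℝ)
    (hmono : ∀ S H : Finset U, S ⊆ H → f S ≤ f H)
    (hsub : ∀ S H : Finset U, f (S ∪ H) + f (S ∩ H) ≤ f S + f H)
    (hf0 : 0 ≤ f ∅)
    (k : ℕ) (a : Fin k → U)
    (hdist : Function.Injective (γ ∘ a))
    (S : ℕ → Finset U)
    (hS : ∀ j : ℕ, S j = (Finset.univ.filter fun i : Fin k => (i : ℕ) < j).image a)
    (hgreedy : ∀ j : Fin k, ∀ e : U,
      (∀ i : Fin k, (i : ℕ) < (j : ℕ) → γ (a i) ≠ γ e) →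
      f (insert e (S j)) - f (S j) ≤ α * (f (insert (a j) (S j)) - f (S j)))
    (O : Finset U) (hO : O.card ≤ k) (hOinj : Set.InjOn γ ↑O) :
    f O ≤ (α + 1) * f (S k) := by
  classical
  have hα0 : (0:ℝ) ≤ α := le_trans zero_le_one hα
  -- S is monotone
  have hSsub : ∀ {j₁ j₂ : ℕ}, j₁ ≤ j₂ → S j₁ ⊆ S j₂ := by
    intro j₁ j₂ h
    rw [hS j₁, hS j₂]
    apply Finset.image_subset_image
    intro x hx
    simp only [Finset.mem_filter, Finset.mem_univ, true_and] at hx ⊢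
    omega
  have hS0 : S 0 = ∅ := by rw [hS 0]; simp
  -- step lemma
  have hstep : ∀ j : Fin k, S ((j : ℕ) + 1) = insert (a j) (S j) := by
    intro j
    rw [hS ((j:ℕ)+1), hS (j:ℕ)]
    have : (Finset.univ.filter fun i : Fin k => (i : ℕ) < (j:ℕ) + 1)
        = insert j (Finset.univ.filter fun i : Fin k => (i : ℕ) < (j:ℕ)) := by
      ext i
      simp only [Finset.mem_filter, Finset.mem_univ, true_and, Finset.mem_insert]
      constructor
      · intro h
        rcases Nat.lt_succ_iff_lt_or_eq.mp h with h | h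
        · exact Or.inr h
        · exact Or.inl (Fin.ext h)
      · rintro (rfl | h)
        · omega
        · omega
    rw [this, Finset.image_insert]
  -- nonnegativity of greedy marginals
  have hmargA : ∀ j : Fin k, 0 ≤ f (insert (a j) (S j)) - f (S j) := by
    intro j
    have := hmono (S j) (insert (a j) (S j)) (Finset.subset_insert _ _)
    linarith
  -- telescoping sum
  have htel : ∑ j : Fin k, (f (insert (a j) (S j)) - f (S j)) = f (S k) - f ∅ := by
    have h1 : ∀ j : Fin k, f (insert (a j) (S j)) - f (S j)
        = f (S ((j:ℕ)+1)) - f (S (j:ℕ)) := by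
      intro j; rw [hstep j]
    rw [Finset.sum_congr rfl (fun j _ => h1 j)]
    rw [Fin.sum_univ_eq_sum_range (fun j => f (S (j+1)) - f (S j)) k]
    rw [Finset.sum_range_sub (fun j => f (S j)) k, hS0]
  rcases O.eq_empty_or_nonempty with rfl | hne
  · have h1 : f ∅ ≤ f (S k) := hmono _ _ (Finset.empty_subset _)
    nlinarith
  -- k ≥ 1
  have hk : 0 < k := lt_of_lt_of_le (Finset.card_pos.mpr hne) hO
  have i₀ : Fin k := ⟨0, hk⟩
  -- injection construction
  set T₁ : Finset U := O.filter (fun o => ∃ i : Fin k, γ (a i) = γ o) with hT₁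
  set T₂ : Finset U := O \ T₁ with hT₂
  have hT₁O : T₁ ⊆ O := Finset.filter_subset _ _
  set g₁ : U → Fin k := fun o =>
    if h : ∃ i : Fin k, γ (a i) = γ o then h.choose else i₀ with hg₁
  have hg₁spec : ∀ o ∈ T₁, γ (a (g₁ o)) = γ o := by
    intro o ho
    have h := (Finset.mem_filter.mp ho).2
    simp only [hg₁, dif_pos h]
    exact h.choose_spec
  set I₁ : Finset (Fin k) := T₁.image g₁ with hI₁
  have hg₁inj : Set.InjOn g₁ ↑T₁ := by
    intro o ho o' ho' h
    have e1 := hg₁spec o ho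
    have e2 := hg₁spec o' ho'
    rw [h, e2] at e1
    exact hOinj (hT₁O ho) (hT₁O ho') e1.symm
  have hcardI₁ : I₁.card = T₁.card := Finset.card_image_of_injOn hg₁inj
  have hcard2 : T₂.card ≤ (Finset.univ \ I₁ : Finset (Fin k)).card := by
    rw [Finset.card_sdiff_of_subset hT₁O, Finset.card_sdiff_of_subset (Finset.subset_univ _), hcardI₁,
      Finset.card_univ, Fintype.card_fin]
    have h1 : T₁.card ≤ O.card := Finset.card_le_card hT₁O
    omega
  obtain ⟨t, htsub, htcard⟩ := Finset.exists_subset_card_eq hcard2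
  have e : {x // x ∈ T₂} ≃ {x // x ∈ t} := Finset.equivOfCardEq htcard.symm
  set g : U → Fin k := fun o =>
    if h : o ∈ T₂ then (e ⟨o, h⟩ : Fin k) else g₁ o with hg
  have hgT₁ : ∀ o ∈ T₁, g o = g₁ o := by
    intro o ho
    have : o ∉ T₂ := by simp [hT₂, Finset.mem_sdiff, ho]
    simp [hg, this]
  have hgT₂ : ∀ o (h : o ∈ T₂), g o = (e ⟨o, h⟩ : Fin k) := by
    intro o h; simp [hg, h]
  -- availability
  have havail : ∀ o ∈ O, ∀ i : Fin k, (i : ℕ) < (g o : ℕ) → γ (a i) ≠ γ o := by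
    intro o ho i hi hcon
    by_cases h1 : o ∈ T₁
    · rw [hgT₁ o h1] at hi
      have hspec := hg₁spec o h1
      have hieq : i = g₁ o :=
        hdist (show (γ ∘ a) i = (γ ∘ a) (g₁ o) from hcon.trans hspec.symm)
      rw [hieq] at hi
      exact lt_irrefl _ hi
    · exact h1 (Finset.mem_filter.mpr ⟨ho, ⟨i, hcon⟩⟩)
  -- injectivity of g on O
  have hginj : Set.InjOn g ↑O := by
    intro o ho o' ho' h
    by_cases h1 : o ∈ T₁ <;> by_cases h2 : o' ∈ T₁
    · rw [hgT₁ o h1, hgT₁ o' h2] at h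
      exact hg₁inj h1 h2 h
    · have ho'2 : o' ∈ T₂ := Finset.mem_sdiff.mpr ⟨ho', h2⟩
      rw [hgT₁ o h1, hgT₂ o' ho'2] at h
      exfalso
      have hmem1 : g₁ o ∈ I₁ := Finset.mem_image_of_mem g₁ h1
      have hmem2 : (e ⟨o', ho'2⟩ : Fin k) ∈ t := (e ⟨o', ho'2⟩).2
      have : (e ⟨o', ho'2⟩ : Fin k) ∈ Finset.univ \ I₁ := htsub hmem2
      rw [← h] at this
      exact (Finset.mem_sdiff.mp this).2 hmem1
    · have ho2 : o ∈ T₂ := Finset.mem_sdiff.mpr ⟨ho, h1⟩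
      rw [hgT₂ o ho2, hgT₁ o' h2] at h
      exfalso
      have hmem1 : g₁ o' ∈ I₁ := Finset.mem_image_of_mem g₁ h2
      have hmem2 : (e ⟨o, ho2⟩ : Fin k) ∈ t := (e ⟨o, ho2⟩).2
      have : (e ⟨o, ho2⟩ : Fin k) ∈ Finset.univ \ I₁ := htsub hmem2
      rw [h] at this
      exact (Finset.mem_sdiff.mp this).2 hmem1
    · have ho2 : o ∈ T₂ := Finset.mem_sdiff.mpr ⟨ho, h1⟩
      have ho'2 : o' ∈ T₂ := Finset.mem_sdiff.mpr ⟨ho', h2⟩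
      rw [hgT₂ o ho2, hgT₂ o' ho'2] at h
      have h3 := e.injective (Subtype.ext h)
      exact congrArg Subtype.val h3
  -- main chain
  have step1 : f O ≤ f (O ∪ S k) := hmono _ _ Finset.subset_union_left
  have step2 := union_marg' f hmono hsub (S k) O
  have step3 : ∑ o ∈ O, (f (insert o (S k)) - f (S k))
      ≤ ∑ o ∈ O, α * (f (insert (a (g o)) (S (g o))) - f (S (g o))) := by
    apply Finset.sum_le_sum
    intro o ho
    have hsub' : S ((g o : ℕ)) ⊆ S k := hSsub (le_of_lt (g o).isLt)
    have h1 : f (insert o (S k)) - f (S k) ≤ f (insert o (S (g o))) - f (S (g o)) :=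
      marg_le' f hmono hsub hsub' o
    have h2 := hgreedy (g o) o (fun i hi => havail o ho i hi)
    linarith
  have step4 : ∑ o ∈ O, α * (f (insert (a (g o)) (S (g o))) - f (S (g o)))
      ≤ α * (f (S k) - f ∅) := by
    rw [← Finset.mul_sum]
    apply mul_le_mul_of_nonneg_left _ hα0
    rw [← htel]
    have heq := Finset.sum_image (s := O) (g := g)
      (f := fun j : Fin k => f (insert (a j) (S (j : ℕ))) - f (S (j : ℕ)))
      (fun x hx y hy h => hginj hx hy h)
    rw [← heq]
    apply Finset.sum_le_sum_of_subset_of_nonneg (Finset.subset_univ _)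
    intro j _ _
    exact hmargA j
  have hfS : f ∅ ≤ f (S k) := hmono _ _ (Finset.empty_subset _)
  nlinarith [mul_nonneg hα0 hf0]
end

section
/- Let U be a finite set, γ : U → ι an assignment of each element to a group, and let f : Finset U → ℝ be monotone and submodular with f(∅) ≥ 0. Let a_1, …, a_k ∈ U lie in pairwise distinct groups, and write S_j = {a_1, …, a_j} (S_0 = ∅). Suppose that for every j ∈ {1, …, k} and every e ∈ U whose group γ(e) does not occur among γ(a_1), …, γ(a_{j−1}), one has f(S_{j−1} ∪ {a_j}) ≥ f(S_{j−1} ∪ {e}). Then for every O ⊆ U with |O| ≤ k on which γ is injective, 2·f(S_k) ≥ f(O); that is, the natural greedy algorithm is a 1/2-approximation for monotone submodular maximization subject to group (partition-matroid) constraints. -/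
/-!
Match the elements of `O` injectively to greedy steps, sending `o` to the step that used the
group of `o` if there is one and to an otherwise unused step if not (possible since `|O| ≤ k`).
At its step `σ o` the element `o` was still admissible, so by submodularity its marginal value
over `S k` is at most the greedy gain `f (S (σ o + 1)) - f (S (σ o))`. Summing,
`f O ≤ f (S k ∪ O) ≤ f (S k) + ∑ gains = 2 f (S k) - f ∅`.
-/

open Finset Function

theorem Set.InjOn.exists_embedding_eqOn {α β : Type*} [Fintype α] [Fintype β]
    (hcard : Fintype.card α ≤ Fintype.card β) {s : Set α} {f : α → β} (hf : s.InjOn f) :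
    ∃ g : α ↪ β, s.EqOn g f := by
  classical
  have himage : #(s.toFinset.image f) ≤ Fintype.card α :=
    card_image_le.trans (card_le_univ _)
  obtain ⟨t, hft, -, ht⟩ := Finset.exists_subsuperset_card_eq (Finset.subset_univ _) himage
    (by rwa [Finset.card_univ])
  obtain ⟨e, he⟩ := Set.MapsTo.exists_equiv_extend_of_card_eq ht.symm
    (fun x hx ↦ hft (Finset.mem_image_of_mem f (Set.mem_toFinset.mpr hx))) hf
  exact ⟨e.toEmbedding.trans (.subtype _), he⟩

theorem Function.Embedding.exists_compatible_of_card_le {α β γ : Type*} [Fintype α] [Fintype β]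
    (hcard : Fintype.card α ≤ Fintype.card β) {f : α → γ} {h : β → γ}
    (hf : Injective f) (hh : Injective h) :
    ∃ σ : α ↪ β, ∀ x y, h y = f x → σ x = y := by
  cases isEmpty_or_nonempty α
  · exact ⟨⟨isEmptyElim, fun x ↦ isEmptyElim x⟩, fun x ↦ isEmptyElim x⟩
  have : Nonempty β := Fintype.card_pos_iff.mp (Fintype.card_pos.trans_le hcard)
  have hinj : Set.InjOn (invFun h ∘ f) {x | f x ∈ Set.range h} := by
    rintro x ⟨y, hy⟩ x' ⟨y', hy'⟩ hxx'
    simp only [comp_apply, ← hy, ← hy', leftInverse_invFun hh _] at hxx'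
    exact hf (by rw [← hy, ← hy', hxx'])
  obtain ⟨σ, hσ⟩ := hinj.exists_embedding_eqOn hcard
  exact ⟨σ, fun x y hxy ↦ by rw [hσ ⟨y, hxy⟩, comp_apply, ← hxy, leftInverse_invFun hh]⟩

def IsSubmodular {α : Type*} [DecidableEq α] (f : Finset α → ℝ) : Prop :=
  ∀ S T : Finset α, f (S ∪ T) + f (S ∩ T) ≤ f S + f T

namespace IsSubmodular

variable {α : Type*} [DecidableEq α] {f : Finset α → ℝ}

theorem insert_sub_le_insert_sub (hsub : IsSubmodular f) (hmono : Monotone f)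
    {S T : Finset α} (hST : S ⊆ T) (e : α) :
    f (insert e T) - f T ≤ f (insert e S) - f S := by
  have hunion : insert e S ∪ T = insert e T := by
    rw [insert_union, union_eq_right.mpr hST]
  have hinter : f S ≤ f (insert e S ∩ T) := hmono (subset_inter (subset_insert _ _) hST)
  have := hsub (insert e S) T
  rw [hunion] at this
  linarith

theorem le_add_sum_insert_sub (hsub : IsSubmodular f) (hmono : Monotone f) (S T : Finset α) :
    f (S ∪ T) ≤ f S + ∑ e ∈ T, (f (insert e S) - f S) := by
  induction T using Finset.induction_on with
  | empty => simp
  | insert e T he ih =>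
    rw [sum_insert he, union_insert]
    have := hsub.insert_sub_le_insert_sub hmono (subset_union_left (s₁ := S) (s₂ := T)) e
    linarith

end IsSubmodular

def prefixImage {α : Type*} [DecidableEq α] {k : ℕ} (a : Fin k → α) (j : ℕ) : Finset α :=
  (univ.filter fun i : Fin k => (i : ℕ) < j).image a

section prefixImage

variable {α : Type*} [DecidableEq α] {k : ℕ} (a : Fin k → α)

@[simp]
theorem prefixImage_zero : prefixImage a 0 = ∅ := by
  simp [prefixImage]

theorem prefixImage_succ (j : Fin k) : prefixImage a (j + 1) = insert (a j) (prefixImage a j) := by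
  rw [prefixImage, prefixImage, ← image_insert]
  congr 1
  ext i
  simp [le_iff_eq_or_lt, Fin.val_inj]

theorem prefixImage_mono : Monotone (prefixImage a) :=
  fun _ _ hij ↦ image_subset_image fun _ ↦ by simpa using fun h ↦ h.trans_le hij

theorem sum_sub_prefixImage {M : Type*} [AddCommGroup M] (g : Finset α → M) :
    ∑ j : Fin k, (g (prefixImage a (j + 1)) - g (prefixImage a j)) = g (prefixImage a k) - g ∅ := by
  rw [Fin.sum_univ_eq_sum_range (fun j ↦ g (prefixImage a (j + 1)) - g (prefixImage a j)),
    sum_range_sub (fun j ↦ g (prefixImage a j)), prefixImage_zero]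

end prefixImage

theorem IsSubmodular.insert_sub_prefixImage_le {α : Type*} [DecidableEq α] {f : Finset α → ℝ}
    (hsub : IsSubmodular f) (hmono : Monotone f) {k : ℕ} {a : Fin k → α} (j : Fin k) {e : α}
    (he : f (insert e (prefixImage a j)) ≤ f (insert (a j) (prefixImage a j))) :
    f (insert e (prefixImage a k)) - f (prefixImage a k) ≤
      f (prefixImage a (j + 1)) - f (prefixImage a j) := by
  have := hsub.insert_sub_le_insert_sub hmono (prefixImage_mono a j.isLt.le) e
  rw [prefixImage_succ]
  linarith

theorem greedy_group_half_apx_general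
    {U : Type*} [DecidableEq U] {ι : Type*}
    (γ : U → ι)
    (f : Finset U → ℝ)
    (hmono : ∀ S H : Finset U, S ⊆ H → f S ≤ f H)
    (hsub : ∀ S H : Finset U, f (S ∪ H) + f (S ∩ H) ≤ f S + f H)
    (hf0 : 0 ≤ f ∅)
    (k : ℕ) (a : Fin k → U)
    (hdist : Function.Injective (γ ∘ a))
    (S : ℕ → Finset U)
    (hS : ∀ j : ℕ, S j = (Finset.univ.filter fun i : Fin k => (i : ℕ) < j).image a)
    (hgreedy : ∀ j : Fin k, ∀ e : U,
      (∀ i : Fin k, (i : ℕ) < (j : ℕ) → γ (a i) ≠ γ e) →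
      f (insert e (S j)) ≤ f (insert (a j) (S j)))
    (O : Finset U) (hO : O.card ≤ k) (hOinj : Set.InjOn γ ↑O) :
    f O ≤ 2 * f (S k) := by
  obtain rfl : S = prefixImage a := funext hS
  replace hsub : IsSubmodular f := hsub
  replace hmono : Monotone f := hmono
  obtain ⟨σ, hσ⟩ := Embedding.exists_compatible_of_card_le (f := fun o : O ↦ γ o)
    (by simpa using hO) (fun x y h ↦ Subtype.ext (hOinj x.2 y.2 h)) hdist
  have hgain (o : O) : f (insert (o : U) (prefixImage a k)) - f (prefixImage a k) ≤
      f (prefixImage a (σ o + 1)) - f (prefixImage a (σ o)) :=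
    hsub.insert_sub_prefixImage_le hmono (σ o) <|
      hgreedy (σ o) o fun i hi hγ ↦ hi.ne' (congrArg Fin.val (hσ o i hγ))
  calc f O ≤ f (prefixImage a k ∪ O) := hmono subset_union_right
    _ ≤ f (prefixImage a k) + ∑ o ∈ O, (f (insert o (prefixImage a k)) - f (prefixImage a k)) :=
      hsub.le_add_sum_insert_sub hmono _ _
    _ ≤ f (prefixImage a k) +
        ∑ o : O, (f (prefixImage a (σ o + 1)) - f (prefixImage a (σ o))) := by
      rw [← sum_coe_sort]; exact (add_le_add_iff_left _).2 (sum_le_sum fun o _ ↦ hgain o)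
    _ ≤ f (prefixImage a k) + ∑ j : Fin k, (f (prefixImage a (j + 1)) - f (prefixImage a j)) := by
      rw [← sum_map univ σ fun j ↦ f (prefixImage a (j + 1)) - f (prefixImage a j)]
      exact (add_le_add_iff_left _).2 <| sum_le_univ_sum_of_nonneg fun j ↦
        sub_nonneg.2 (hmono (prefixImage_mono a j.val.le_succ))
    _ = 2 * f (prefixImage a k) - f ∅ := by rw [sum_sub_prefixImage]; ring
    _ ≤ 2 * f (prefixImage a k) := by linarith

/-- The natural greedy algorithm is a `1/2`-approximation for monotone submodular
maximization subject to group (partition-matroid) constraints: if greedy elements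
`a 0, …, a (k-1)` lie in pairwise distinct groups and each greedy step picks an
element of maximum marginal value among elements of still-unused groups, then for
every feasible `O` (at most one element per group, `|O| ≤ k`), `2 * f (S k) ≥ f O`,
where `S j = {a 0, …, a (j-1)}`. -/
theorem greedy_group_half_apx
    {U : Type*} [Fintype U] [DecidableEq U] {ι : Type*}
    (γ : U → ι)
    (f : Finset U → ℝ)
    (hmono : ∀ S H : Finset U, S ⊆ H → f S ≤ f H)
    (hsub : ∀ S H : Finset U, f (S ∪ H) + f (S ∩ H) ≤ f S + f H)
    (hf0 : 0 ≤ f ∅)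
    (k : ℕ) (a : Fin k → U)
    (hdist : Function.Injective (γ ∘ a))
    (S : ℕ → Finset U)
    (hS : ∀ j : ℕ, S j = (Finset.univ.filter fun i : Fin k => (i : ℕ) < j).image a)
    (hgreedy : ∀ j : Fin k, ∀ e : U,
      (∀ i : Fin k, (i : ℕ) < (j : ℕ) → γ (a i) ≠ γ e) →
      f (insert e (S j)) ≤ f (insert (a j) (S j)))
    (O : Finset U) (hO : O.card ≤ k) (hOinj : Set.InjOn γ ↑O) :
    f O ≤ 2 * f (S k) :=
  greedy_group_half_apx_general γ f hmono hsub hf0 k a hdist S hS hgreedy O hO hOinj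
end

section
/- Let Q ≥ 1 and let s_1, …, s_m be positive integers with s_1 + ⋯ + s_m = 2Q. Let T = {1, …, 4Q} and let R = {1, …, Q} ∪ {2Q+1, …, 3Q} ⊆ T be the set of busy slots (so T \ R consists of two gaps {Q+1, …, 2Q} and {3Q+1, …, 4Q}, each of size Q). Then the following are equivalent: (i) there exist starting times t_1, …, t_m with W_i = {t_i, t_i+1, …, t_i + s_i − 1} ⊆ T for each i and |(⋃_{i=1}^m W_i) \ R| = 2Q (i.e., the events achieve total agreement 2Q); (ii) there exists a subset P ⊆ {1, …, m} with Σ_{i ∈ P} s_i = Q (i.e., the numbers s_1, …, s_m admit an equal partition). -/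
/-!
Since the events have total length `2Q`, agreement `2Q` forces them to be pairwise disjoint,
to avoid the busy slots and to fill both gaps `{Q+1, …, 2Q}` and `{3Q+1, …, 4Q}` exactly.
The busy slot `2Q+1` separates the gaps, so no event meets both; the events inside the first
gap give a subset summing to `Q`. Conversely, the events of a subset summing to `Q` placed back
to back from `Q+1`, and the remaining ones back to back from `3Q+1`, tile the two gaps.
-/

open Finset

namespace Finset

variable {α ι : Type*}

theorem eq_sdiff_of_subset_of_card_le [DecidableEq α] {U T R : Finset α} (hUT : U ⊆ T)
    (hU : #U ≤ #(T \ R)) (hUR : #(T \ R) ≤ #(U \ R)) : U = T \ R := by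
  have hUR_eq : U \ R = T \ R := eq_of_subset_of_card_le (sdiff_subset_sdiff hUT le_rfl) hUR
  have hU_eq : U \ R = U := eq_of_subset_of_card_le sdiff_subset (hU.trans hUR)
  rw [← hU_eq, hUR_eq]

theorem card_le_sum_filter_of_subset_biUnion [DecidableEq α] {S : Finset α} {A : Finset ι}
    {W : ι → Finset α} (p : ι → Prop) [DecidablePred p] (hS : S ⊆ A.biUnion W)
    (hp : ∀ i ∈ A, ∀ x ∈ S, x ∈ W i → p i) : #S ≤ ∑ i ∈ A with p i, #(W i) := by
  refine (card_le_card fun x hx => ?_).trans card_biUnion_le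
  obtain ⟨i, hi, hxi⟩ := mem_biUnion.1 (hS hx)
  exact mem_biUnion.2 ⟨i, mem_filter.2 ⟨hi, hp i hi x hx hxi⟩, hxi⟩

theorem le_of_Ico_subset_of_notMem {S : Finset ℕ} {a b c : ℕ} (h : Ico a b ⊆ S) (hc : c ∉ S)
    (hac : a ≤ c) : b ≤ c := by
  by_contra! hcb
  exact hc (h (mem_Ico.2 ⟨hac, hcb⟩))

end Finset

section Packing

variable {ι : Type*} [LinearOrder ι] (s : ι → ℕ)

def packedStart (A : Finset ι) (b : ℕ) (i : ι) : ℕ :=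
  b + ∑ j ∈ A with j < i, s j

theorem biUnion_Ico_packedStart (A : Finset ι) (b : ℕ) :
    A.biUnion (fun i => Ico (packedStart s A b i) (packedStart s A b i + s i)) =
      Ico b (b + ∑ i ∈ A, s i) := by
  induction A using Finset.induction_on_max with
  | empty => simp
  | insert a A ha ih =>
    have haA : a ∉ A := fun h => lt_irrefl a (ha a h)
    have hstart_a : packedStart s (insert a A) b a = b + ∑ i ∈ A, s i := by
      rw [packedStart, filter_insert, if_neg (lt_irrefl a), filter_true_of_mem ha]
    have hstart : ∀ i ∈ A, packedStart s (insert a A) b i = packedStart s A b i := by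
      intro i hi
      rw [packedStart, packedStart, filter_insert, if_neg (lt_asymm (ha i hi))]
    rw [biUnion_insert, biUnion_congr rfl fun i hi => by rw [hstart i hi], ih, hstart_a,
      sum_insert haA, add_comm (s a), ← add_assoc, union_comm, Ico_union_Ico_eq_Ico] <;> omega

end Packing

section Reduction

variable (Q : ℕ) {ι : Type*} [Fintype ι] (s : ι → ℕ)

theorem Icc_sdiff_busy :
    Icc 1 (4 * Q) \ (Icc 1 Q ∪ Icc (2 * Q + 1) (3 * Q)) =
      Ico (Q + 1) (2 * Q + 1) ∪ Ico (3 * Q + 1) (4 * Q + 1) := by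
  ext x
  simp only [mem_sdiff, mem_union, mem_Icc, mem_Ico]
  omega

theorem card_gaps : #(Ico (Q + 1) (2 * Q + 1) ∪ Ico (3 * Q + 1) (4 * Q + 1)) = 2 * Q := by
  have hdisj : Disjoint (Ico (Q + 1) (2 * Q + 1)) (Ico (3 * Q + 1) (4 * Q + 1)) :=
    Ico_disjoint_Ico_consecutive _ _ _ |>.mono_right (Ico_subset_Ico (by omega) le_rfl)
  rw [card_union_of_disjoint hdisj, Nat.card_Ico, Nat.card_Ico]
  omega

theorem exists_sum_eq_of_biUnion_eq_gaps {t : ι → ℕ} (hsum : ∑ i, s i = 2 * Q)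
    (hU : univ.biUnion (fun i => Ico (t i) (t i + s i)) =
      Ico (Q + 1) (2 * Q + 1) ∪ Ico (3 * Q + 1) (4 * Q + 1)) :
    ∃ P : Finset ι, ∑ i ∈ P, s i = Q := by
  have hcard : ∀ i, #(Ico (t i) (t i + s i)) = s i := fun i => by simp
  have hfirst : ∀ i, t i ≤ 2 * Q → t i + s i ≤ 2 * Q + 1 := fun i hi =>
    le_of_Ico_subset_of_notMem (hU ▸ subset_biUnion_of_mem _ (mem_univ i))
      (by simp only [mem_union, mem_Ico]; omega) (by omega)
  have h1 : Q ≤ ∑ i with t i ≤ 2 * Q, s i := by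
    have := card_le_sum_filter_of_subset_biUnion (S := Ico (Q + 1) (2 * Q + 1))
      (fun i => t i ≤ 2 * Q) (hU ▸ subset_union_left) fun i _ x hx hxi => by
        simp only [mem_Ico] at hx hxi; omega
    simp only [hcard, Nat.card_Ico] at this
    omega
  have h2 : Q ≤ ∑ i with ¬ t i ≤ 2 * Q, s i := by
    have := card_le_sum_filter_of_subset_biUnion (S := Ico (3 * Q + 1) (4 * Q + 1))
      (fun i => ¬ t i ≤ 2 * Q) (hU ▸ subset_union_right) fun i _ x hx hxi hi => by
        have := hfirst i hi
        simp only [mem_Ico] at hx hxi; omega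
    simp only [hcard, Nat.card_Ico] at this
    omega
  have := sum_filter_add_sum_filter_not univ (fun i => t i ≤ 2 * Q) s
  exact ⟨univ.filter (t · ≤ 2 * Q), by omega⟩

def partitionSchedule [LinearOrder ι] (P : Finset ι) (i : ι) : ℕ :=
  if i ∈ P then packedStart s P (Q + 1) i else packedStart s Pᶜ (3 * Q + 1) i

theorem biUnion_partitionSchedule [LinearOrder ι] {P : Finset ι} (hsum : ∑ i, s i = 2 * Q)
    (hP : ∑ i ∈ P, s i = Q) :
    univ.biUnion (fun i => Ico (partitionSchedule Q s P i) (partitionSchedule Q s P i + s i)) =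
      Ico (Q + 1) (2 * Q + 1) ∪ Ico (3 * Q + 1) (4 * Q + 1) := by
  have hPc : ∑ i ∈ Pᶜ, s i = Q := by
    have := sum_add_sum_compl P s
    omega
  have hfirst : P.biUnion (fun i => Ico (partitionSchedule Q s P i)
      (partitionSchedule Q s P i + s i)) = Ico (Q + 1) (2 * Q + 1) := by
    rw [show 2 * Q + 1 = Q + 1 + ∑ i ∈ P, s i by omega, ← biUnion_Ico_packedStart]
    exact biUnion_congr rfl fun i hi => by rw [partitionSchedule, if_pos hi]
  have hsecond : Pᶜ.biUnion (fun i => Ico (partitionSchedule Q s P i)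
      (partitionSchedule Q s P i + s i)) = Ico (3 * Q + 1) (4 * Q + 1) := by
    rw [show 4 * Q + 1 = 3 * Q + 1 + ∑ i ∈ Pᶜ, s i by omega, ← biUnion_Ico_packedStart]
    exact biUnion_congr rfl fun i hi => by rw [partitionSchedule, if_neg (mem_compl.1 hi)]
  rw [← union_compl P, union_biUnion, hfirst, hsecond]

end Reduction

theorem partition_reduction_correct_general
    (Q : ℕ) (m : ℕ) (s : Fin m → ℕ)
    (hs : ∀ i, 1 ≤ s i) (hsum : ∑ i, s i = 2 * Q) :
    (∃ t : Fin m → ℕ,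
        (∀ i, Finset.Icc (t i) (t i + s i - 1) ⊆ Finset.Icc 1 (4 * Q)) ∧
        ((Finset.univ.biUnion fun i => Finset.Icc (t i) (t i + s i - 1)) \
            (Finset.Icc 1 Q ∪ Finset.Icc (2 * Q + 1) (3 * Q))).card = 2 * Q)
      ↔ (∃ P : Finset (Fin m), ∑ i ∈ P, s i = Q) := by
  have hwindow : ∀ (t : ℕ) i, Icc t (t + s i - 1) = Ico t (t + s i) := fun t i => by
    rw [← Ico_add_one_right_eq_Icc, Nat.sub_add_cancel (le_add_left (hs i))]
  simp only [hwindow]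
  constructor
  · rintro ⟨t, hsub, hagree⟩
    refine exists_sum_eq_of_biUnion_eq_gaps Q s (t := t) hsum ?_
    rw [← Icc_sdiff_busy]
    refine eq_sdiff_of_subset_of_card_le (biUnion_subset.2 fun i _ => hsub i) ?_ ?_
    · calc #(univ.biUnion _) ≤ ∑ i, #(Ico (t i) (t i + s i)) := card_biUnion_le
        _ = #(Icc 1 (4 * Q) \ (Icc 1 Q ∪ Icc (2 * Q + 1) (3 * Q))) := by
          simp [hsum, Icc_sdiff_busy, card_gaps]
    · rw [hagree, Icc_sdiff_busy, card_gaps]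
  · rintro ⟨P, hP⟩
    have hU := biUnion_partitionSchedule Q s hsum hP
    rw [← Icc_sdiff_busy] at hU
    refine ⟨partitionSchedule Q s P, fun i => ?_, ?_⟩
    · exact (subset_biUnion_of_mem _ (mem_univ i)).trans (hU ▸ sdiff_subset)
    · rw [hU, Finset.sdiff_idem, Icc_sdiff_busy, card_gaps]

/-- Correctness of the reduction from Partition: events of lengths `s 1, …, s m`
(summing to `2Q`) can be scheduled inside the timeline `{1, …, 4Q}` with busy slots
`{1, …, Q} ∪ {2Q+1, …, 3Q}` so as to achieve total agreement `2Q` iff the numbers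
`s i` admit a subset summing to `Q` (an equal partition). -/
theorem partition_reduction_correct
    (Q : ℕ) (hQ : 1 ≤ Q) (m : ℕ) (s : Fin m → ℕ)
    (hs : ∀ i, 1 ≤ s i) (hsum : ∑ i, s i = 2 * Q) :
    (∃ t : Fin m → ℕ,
        (∀ i, Finset.Icc (t i) (t i + s i - 1) ⊆ Finset.Icc 1 (4 * Q)) ∧
        ((Finset.univ.biUnion fun i => Finset.Icc (t i) (t i + s i - 1)) \
            (Finset.Icc 1 Q ∪ Finset.Icc (2 * Q + 1) (3 * Q))).card = 2 * Q)
      ↔ (∃ P : Finset (Fin m), ∑ i ∈ P, s i = Q) :=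
  partition_reduction_correct_general Q m s hs hsum
end

section
/- Let T be a finite set of time slots, R ⊆ T a set of slots occupied by rigid jobs, V ⊆ T the set of allowed slots of a single flexible job with processing time p, where R ∩ V = ∅ and p ≤ |V|. Let W ⊆ T be the set of slots occupied by the event. Then the maximum agreement, namely max over P ⊆ V with |P| = p of |W \ (R ∪ P)|, equals |W| − |W ∩ R| − max(p − (|V| − |V ∩ W|), 0). -/
/-!
Since `P ⊆ V` misses `R`, the free slots of the event are `(W \ R) \ P`, so maximising the
agreement means minimising `|P ∩ W|` over `p`-subsets `P` of `V`. At most `|V \ W|` slots of `P`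
can avoid `W`, so `|P ∩ W| ≥ p - |V \ W|`, and filling `V \ W` first (then topping up inside `W`)
attains this bound.
-/

namespace Finset

variable {α : Type*} [DecidableEq α] {V X P : Finset α} {p : ℕ}

theorem card_sub_card_sdiff_le_card_inter (hPV : P ⊆ V) : #P - #(V \ X) ≤ #(P ∩ X) := by
  have hsplit := card_sdiff_add_card_inter P X
  have hout : #(P \ X) ≤ #(V \ X) := card_le_card (sdiff_subset_sdiff hPV le_rfl)
  omega

theorem exists_subset_card_eq_card_inter_eq (hp : p ≤ #V) :
    ∃ P ⊆ V, #P = p ∧ #(P ∩ X) = p - #(V \ X) := by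
  rcases le_total p #(V \ X) with hsmall | hlarge
  · obtain ⟨P, hPsub, hPcard⟩ := exists_subset_card_eq hsmall
    have hPX : P ∩ X = ∅ :=
      disjoint_iff_inter_eq_empty.mp (disjoint_of_subset_left hPsub sdiff_disjoint)
    exact ⟨P, hPsub.trans sdiff_subset, hPcard, by rw [hPX, card_empty]; omega⟩
  · obtain ⟨P, hVXP, hPV, hPcard⟩ := exists_subsuperset_card_eq sdiff_subset hlarge hp
    have hout : P \ X = V \ X :=
      (sdiff_subset_sdiff hPV le_rfl).antisymm fun x hx => mem_sdiff.mpr ⟨hVXP hx, (mem_sdiff.mp hx).2⟩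
    have hsplit := card_sdiff_add_card_inter P X
    rw [hout] at hsplit
    exact ⟨P, hPV, hPcard, by omega⟩

theorem sup_powersetCard_card_sdiff (hp : p ≤ #V) :
    (V.powersetCard p).sup (fun P => #(X \ P)) = #X - (p - #(V \ X)) := by
  apply le_antisymm
  · refine Finset.sup_le fun P hP => ?_
    obtain ⟨hPV, hPcard⟩ := mem_powersetCard.mp hP
    have hinter := card_sub_card_sdiff_le_card_inter (X := X) hPV
    rw [card_sdiff (s := P)]
    omega
  · obtain ⟨P, hPV, hPcard, hPX⟩ := exists_subset_card_eq_card_inter_eq (X := X) hp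
    calc #X - (p - #(V \ X)) = #(X \ P) := by rw [card_sdiff (s := P), hPX]
      _ ≤ _ := le_sup (f := fun P => #(X \ P)) (mem_powersetCard.mpr ⟨hPV, hPcard⟩)

end Finset

open Finset in
theorem core_instance_max_agreement_general
    {T : Type*} [DecidableEq T]
    (R V W : Finset T) (hRV : R ∩ V = ∅)
    (p : ℕ) (hp : p ≤ V.card) :
    (((V.powersetCard p).sup fun P => (W \ (R ∪ P)).card : ℕ) : ℤ) =
      (W.card : ℤ) - ((W ∩ R).card : ℤ) -
        max ((p : ℤ) - ((V.card : ℤ) - ((V ∩ W).card : ℤ))) 0 := by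
  have hfree : ∀ P : Finset T, W \ (R ∪ P) = (W \ R) \ P := fun P => sdiff_sdiff_left.symm
  have hVR : Disjoint V R := (disjoint_iff_inter_eq_empty.mpr hRV).symm
  have hVW : V \ (W \ R) = V \ W := by
    rw [sdiff_sdiff_right', hVR.eq_bot, sup_bot_eq]
  simp_rw [hfree]
  rw [sup_powersetCard_card_sdiff hp, hVW]
  have hW := card_sdiff_add_card_inter W R
  have hV := card_sdiff_add_card_inter V W
  have hVWR : #(V ∩ W) ≤ #(W \ R) :=
    card_le_card fun x hx =>
      mem_sdiff.mpr ⟨(mem_inter.mp hx).2, fun hxR => disjoint_left.mp hVR (mem_inter.mp hx).1 hxR⟩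
  omega

/-- Maximum agreement in a core instance: with rigid-job slots `R`, flexible-job
allowed slots `V` (disjoint from `R`) and processing time `p ≤ |V|`, and event
slots `W`, the maximum over all `P ⊆ V` with `|P| = p` of `|W \ (R ∪ P)|` equals
`|W| - |W ∩ R| - max (p - (|V| - |V ∩ W|)) 0`. -/
theorem core_instance_max_agreement
    {T : Type*} [Fintype T] [DecidableEq T]
    (R V W : Finset T) (hRV : R ∩ V = ∅)
    (p : ℕ) (hp : p ≤ V.card) :
    (((V.powersetCard p).sup fun P => (W \ (R ∪ P)).card : ℕ) : ℤ) =
      (W.card : ℤ) - ((W ∩ R).card : ℤ) -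
        max ((p : ℤ) - ((V.card : ℤ) - ((V ∩ W).card : ℤ))) 0 :=
  core_instance_max_agreement_general R V W hRV p hp
end
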